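/- In the braid group B_4, the element A = a_1 a_2 a_3 a_3 satisfies A³ = Δ², where Δ² = (a_1 a_2 a_3)⁴ is the full twist. -/
import Mathlib


/-- The braid relations on `m` Artin generators: commutation for distant
generators and the braid relation for adjacent ones. -/
def braidRels (m : ℕ) : Set (FreeGroup (Fin m)) :=
  {r | (∃ i j : Fin m, (i : ℕ) + 2 ≤ (j : ℕ) ∧
        r = FreeGroup.of i * FreeGroup.of j * (FreeGroup.of i)⁻¹ * (FreeGroup.of j)⁻¹) ∨
       (∃ i j : Fin m, (i : ℕ) + 1 = (j : ℕ) ∧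
        r = FreeGroup.of i * FreeGroup.of j * FreeGroup.of i *
            (FreeGroup.of j * FreeGroup.of i * FreeGroup.of j)⁻¹)}

/-- The braid group on `m + 1` strands, with `m` Artin generators. -/
abbrev BraidGroup (m : ℕ) : Type := PresentedGroup (braidRels m)

/-- The Artin generator `a_{i+1}` of the braid group. -/
def σ {m : ℕ} (i : Fin m) : BraidGroup m := PresentedGroup.of i

/-- Any braid relator maps to `1` in the braid group. -/
lemma rel_one {m : ℕ} {r : FreeGroup (Fin m)} (h : r ∈ braidRels m) :
    (QuotientGroup.mk r : BraidGroup m) = 1 :=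
  (QuotientGroup.eq_one_iff r).mpr (Subgroup.subset_normalClosure h)

/-- Distant generators commute. -/
lemma comm_rel {m : ℕ} (i j : Fin m) (h : (i : ℕ) + 2 ≤ (j : ℕ)) :
    σ i * σ j = σ j * σ i := by
  have h2 : σ i * σ j * (σ i)⁻¹ * (σ j)⁻¹ = 1 :=
    rel_one (Or.inl ⟨i, j, h, rfl⟩)
  rw [mul_inv_eq_one, mul_inv_eq_iff_eq_mul] at h2
  exact h2

/-- Adjacent generators satisfy the braid relation. -/
lemma braid_rel {m : ℕ} (i j : Fin m) (h : (i : ℕ) + 1 = (j : ℕ)) :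
    σ i * σ j * σ i = σ j * σ i * σ j := by
  have h2 : σ i * σ j * σ i * (σ j * σ i * σ j)⁻¹ = 1 :=
    rel_one (Or.inr ⟨i, j, h, rfl⟩)
  rw [mul_inv_eq_one] at h2; exact h2

/-- The purely group-theoretic computation: in any group, if `a`, `b`, `c`
satisfy the braid relations of `B₄`, then `(a b c c)³ = (a b c)⁴`. -/
lemma abstract_key {G : Type*} [Group G] (a b c : G)
    (h1 : a * b * a = b * a * b) (h2 : b * c * b = c * b * c) (h3 : a * c = c * a) :
    (a * b * c * c) ^ 3 = (a * b * c) ^ 4 := by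
  have h3x : ∀ x : G, c * (a * x) = a * (c * x) := by
    intro x; rw [← mul_assoc, ← h3, mul_assoc]
  have h2x : ∀ x : G, c * (b * (c * x)) = b * (c * (b * x)) := by
    intro x; rw [← mul_assoc, ← mul_assoc, ← h2, mul_assoc, mul_assoc]
  have h1x : ∀ x : G, b * (a * (b * x)) = a * (b * (a * x)) := by
    intro x; rw [← mul_assoc, ← mul_assoc, ← h1, mul_assoc, mul_assoc]
  have E1 : ∀ x : G, c * (a * (b * (c * x))) = a * (b * (c * (b * x))) := by
    intro x; rw [h3x, h2x]
  have key : b * (a * (b * (c * (b * c)))) = a * (b * (c * (a * (b * c)))) := by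
    rw [h3x, h1x]
  simp only [pow_succ, pow_zero, one_mul, mul_assoc]
  rw [E1, E1 c, key]

/-- In `B₄`, the element `A = a₁ a₂ a₃ a₃` satisfies `A ^ 3 = Δ²`, where
`Δ² = (a₁ a₂ a₃)⁴` is the full twist. -/
theorem braid_B4_A_cubed_eq_fullTwist :
    (σ (0 : Fin 3) * σ 1 * σ 2 * σ 2) ^ 3 = (σ (0 : Fin 3) * σ 1 * σ 2) ^ 4 := by
  exact abstract_key _ _ _ (braid_rel 0 1 (by decide)) (braid_rel 1 2 (by decide))
    (comm_rel 0 2 (by decide))
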